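/- Assume h ∘ h ∘ h = 0, g₀(h(Y), Y) = 0, h(h(X₀)) = 0, g₀(h(X₀), X₀) = 0, and Υ := h(Y) ≠ 0. Then there exists a unique vector X₂ ∈ V such that h(z) = g₀(Υ, z) · X₂ + g₀(X₂, z) · Υ for every z ∈ V. Moreover this X₂ satisfies g₀(X₂, X₂) = 0 (X₂ is lightlike for g₀), g₀(X₂, Y) = 1, and g₀(X₂, Υ) = 0; consequently g₀ + h = g₀ + Υ♭ ⊗ X₂♭ + X₂♭ ⊗ Υ♭. -/
import Mathlib

section Aux
variable {V : Type*} [AddCommGroup V] [Module ℝ V]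
  (g₀ : V →ₗ[ℝ] V →ₗ[ℝ] ℝ) (Y X₀ : V)

lemma auxZ (hpos : ∀ w : V, w ≠ 0 → g₀ w Y = 0 → g₀ w X₀ = 0 → 0 < g₀ w w)
    (v : V) (h1 : g₀ v v = 0) (h2 : g₀ v Y = 0) (h3 : g₀ v X₀ = 0) : v = 0 := by
  by_contra hv
  have := hpos v hv h2 h3
  rw [h1] at this
  exact lt_irrefl 0 this

lemma auxL (hg₀symm : ∀ u v : V, g₀ u v = g₀ v u)
    (hpos : ∀ w : V, w ≠ 0 → g₀ w Y = 0 → g₀ w X₀ = 0 → 0 < g₀ w w)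
    (s s' : V) (hss : g₀ s s = 0) (hs's' : g₀ s' s' = 0) (hss' : g₀ s s' = 0)
    (hdet : g₀ s Y * g₀ s' X₀ = g₀ s X₀ * g₀ s' Y) (hs' : s' ≠ 0) :
    ∃ c : ℝ, s = c • s' := by
  have hs's : g₀ s' s = 0 := by rw [hg₀symm]; exact hss'
  by_cases hY' : g₀ s' Y = 0
  · by_cases hX' : g₀ s' X₀ = 0
    · exact absurd (auxZ g₀ Y X₀ hpos s' hs's' hY' hX') hs'
    · refine ⟨g₀ s X₀ / g₀ s' X₀, ?_⟩
      have hv : g₀ s' X₀ • s - g₀ s X₀ • s' = 0 := by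
        refine auxZ g₀ Y X₀ hpos _ ?_ ?_ ?_
        · simp only [map_sub, map_smul, LinearMap.sub_apply, LinearMap.smul_apply,
            smul_eq_mul]
          rw [hss, hs's', hss', hs's]; ring
        · simp only [map_sub, map_smul, LinearMap.sub_apply, LinearMap.smul_apply,
            smul_eq_mul]
          have hd := hdet
          rw [hY'] at hd
          rw [hY']
          linarith
        · simp only [map_sub, map_smul, LinearMap.sub_apply, LinearMap.smul_apply,
            smul_eq_mul]
          ring
      have h2 : g₀ s' X₀ • s = g₀ s X₀ • s' := by
        rwa [sub_eq_zero] at hv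
      rw [div_eq_inv_mul, mul_smul, ← h2, inv_smul_smul₀ hX']
  · refine ⟨g₀ s Y / g₀ s' Y, ?_⟩
    have hv : g₀ s' Y • s - g₀ s Y • s' = 0 := by
      refine auxZ g₀ Y X₀ hpos _ ?_ ?_ ?_
      · simp only [map_sub, map_smul, LinearMap.sub_apply, LinearMap.smul_apply,
          smul_eq_mul]
        rw [hss, hs's', hss', hs's]; ring
      · simp only [map_sub, map_smul, LinearMap.sub_apply, LinearMap.smul_apply,
          smul_eq_mul]
        ring
      · simp only [map_sub, map_smul, LinearMap.sub_apply, LinearMap.smul_apply,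
          smul_eq_mul]
        linarith [hdet]
    have h2 : g₀ s' Y • s = g₀ s Y • s' := by rwa [sub_eq_zero] at hv
    rw [div_eq_inv_mul, mul_smul, ← h2, inv_smul_smul₀ hY']

end Aux



/-- Existence and uniqueness of the lightlike vector `X₂` with
`h = Υ♭ ⊗ X₂♭ + X₂♭ ⊗ Υ♭` where `Υ = h Y ≠ 0`; moreover `g₀(X₂, X₂) = 0`,
`g₀(X₂, Y) = 1` and `g₀(X₂, Υ) = 0`. -/
theorem stmt6 {V : Type*} [AddCommGroup V] [Module ℝ V] [FiniteDimensional ℝ V]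
    (g₀ : V →ₗ[ℝ] V →ₗ[ℝ] ℝ) (hg₀symm : ∀ u v : V, g₀ u v = g₀ v u)
    (h : V →ₗ[ℝ] V) (hsymm : ∀ u v : V, g₀ (h u) v = g₀ u (h v))
    (Y X₀ : V) (hYY : g₀ Y Y = -1) (hXX : g₀ X₀ X₀ = -1) (hYX : g₀ Y X₀ = 0)
    (hpos : ∀ w : V, w ≠ 0 → g₀ w Y = 0 → g₀ w X₀ = 0 → 0 < g₀ w w)
    (hnil : h ∘ₗ (h ∘ₗ h) = 0)
    (hhYY : g₀ (h Y) Y = 0) (hhhX : h (h X₀) = 0) (hhXX : g₀ (h X₀) X₀ = 0)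
    (hΥ : h Y ≠ 0) :
    (∃! X₂ : V, ∀ z : V, h z = g₀ (h Y) z • X₂ + g₀ X₂ z • h Y) ∧
    (∀ X₂ : V, (∀ z : V, h z = g₀ (h Y) z • X₂ + g₀ X₂ z • h Y) →
      g₀ X₂ X₂ = 0 ∧ g₀ X₂ Y = 1 ∧ g₀ X₂ (h Y) = 0) := by
  have keyZ : ∀ v : V, g₀ v v = 0 → g₀ v Y = 0 → g₀ v X₀ = 0 → v = 0 :=
    auxZ g₀ Y X₀ hpos
  have keyL := auxL g₀ Y X₀ hg₀symm hpos
  have hnil' : ∀ x : V, h (h (h x)) = 0 := by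
    intro x
    have := LinearMap.ext_iff.mp hnil x
    simpa using this
  -- the quadratic form vanishes on the orthogonal of h Y
  have starQ : ∀ u : V, g₀ (h Y) u = 0 → g₀ (h u) u = 0 := by
    intro u hu0
    by_cases hb : h (h Y) = 0
    · -- degenerate case : h² Y = 0
      have hhu : h (h u) = 0 := by
        refine keyZ _ ?_ ?_ ?_
        · rw [hsymm (h u), hnil']; simp
        · rw [hsymm (h u), hsymm u, hb]; simp
        · rw [hsymm (h u), hsymm u, hhhX]; simp
      have e1 : g₀ (h u) Y = 0 := by
        rw [hsymm u, hg₀symm]; exact hu0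
      obtain ⟨c, hc⟩ := keyL (h u) (h Y)
        (by rw [hsymm u, hhu]; simp)
        (by rw [hsymm Y, hb]; simp)
        (by rw [hsymm u, hb]; simp)
        (by rw [e1, hhYY]; ring) hΥ
      rw [hc, map_smul, LinearMap.smul_apply, smul_eq_mul, hu0, mul_zero]
    · -- main case : b = h (h Y) ≠ 0
      have gbY : g₀ (h (h Y)) Y = g₀ (h Y) (h Y) := by rw [hsymm (h Y)]
      have gbX : g₀ (h (h Y)) X₀ = 0 := by rw [hsymm (h Y), hsymm Y, hhhX]; simp
      have gbb : g₀ (h (h Y)) (h (h Y)) = 0 := by rw [hsymm (h Y), hnil']; simp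
      have hνne : g₀ (h Y) (h Y) ≠ 0 := by
        intro h0
        exact hb (keyZ _ gbb (by rw [gbY, h0]) gbX)
      -- a = h X₀ is proportional to b
      have gaa : g₀ (h X₀) (h X₀) = 0 := by rw [hsymm X₀, hhhX]; simp
      have gab : g₀ (h X₀) (h (h Y)) = 0 := by rw [hsymm X₀, hnil']; simp
      obtain ⟨lam, hlam⟩ := keyL (h X₀) (h (h Y)) gaa gbb gab
        (by rw [gbX, hhXX]; ring) hb
      set c₀ := g₀ (h (h Y)) u / g₀ (h Y) (h Y) with hc₀
      set u' := u - c₀ • Y with hu'def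
      have gbu' : g₀ (h (h Y)) u' = 0 := by
        rw [hu'def, map_sub, map_smul, smul_eq_mul, gbY, hc₀,
          div_mul_cancel₀ _ hνne, sub_self]
      have gΥu' : g₀ (h Y) u' = 0 := by
        rw [hu'def, map_sub, map_smul, smul_eq_mul, hu0, hhYY, mul_zero, sub_zero]
      -- h (h u') is proportional to b
      have q1 : g₀ (h (h u')) (h (h u')) = 0 := by rw [hsymm (h u'), hnil']; simp
      have q2 : g₀ (h (h u')) (h (h Y)) = 0 := by rw [hsymm (h u'), hnil']; simp
      have q3 : g₀ (h (h u')) Y = 0 := by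
        rw [hsymm (h u'), hsymm u', hg₀symm]; exact gbu'
      have q4 : g₀ (h (h u')) X₀ = 0 := by
        rw [hsymm (h u'), hsymm u', hhhX]; simp
      obtain ⟨c₁, hc₁⟩ := keyL (h (h u')) (h (h Y)) q1 gbb q2
        (by rw [q3, q4]; ring) hb
      -- h u' is proportional to b
      have r1 : g₀ (h u') (h u') = 0 := by
        rw [hsymm u', hc₁, map_smul, smul_eq_mul, hg₀symm, gbu', mul_zero]
      have r2 : g₀ (h u') (h (h Y)) = 0 := by rw [hsymm u', hnil']; simp
      have r3 : g₀ (h u') X₀ = 0 := by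
        rw [hsymm u', hg₀symm, hlam, map_smul, LinearMap.smul_apply, smul_eq_mul,
          gbu', mul_zero]
      obtain ⟨c₂, hc₂⟩ := keyL (h u') (h (h Y)) r1 gbb r2
        (by rw [gbX, r3]; ring) hb
      have Qu' : g₀ (h u') u' = 0 := by
        rw [hc₂, map_smul, LinearMap.smul_apply, smul_eq_mul, gbu', mul_zero]
      have e1 : g₀ (h u') Y = 0 := by
        rw [hsymm u', hg₀symm]; exact gΥu'
      have hu'' : u = u' + c₀ • Y := by rw [hu'def]; abel
      rw [hu'']
      simp only [map_add, map_smul, LinearMap.add_apply, LinearMap.smul_apply,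
        smul_eq_mul]
      rw [Qu', e1, gΥu', hhYY]; ring
  -- polarization
  have polarB : ∀ u v : V, g₀ (h Y) u = 0 → g₀ (h Y) v = 0 → g₀ (h u) v = 0 := by
    intro u v hu hv
    have huv := starQ (u + v) (by rw [map_add, hu, hv, add_zero])
    have hqu := starQ u hu
    have hqv := starQ v hv
    have hsym2 : g₀ (h v) u = g₀ (h u) v := by rw [hsymm v, hg₀symm]
    simp only [map_add, LinearMap.add_apply] at huv
    rw [hqu, hqv, hsym2] at huv
    linarith
  -- a vector pairing to 1 with h Y
  obtain ⟨z₀, hz₀⟩ : ∃ z : V, g₀ (h Y) z ≠ 0 := by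
    by_contra hcon
    push_neg at hcon
    exact hΥ (keyZ _ (hcon _) (hcon Y) (hcon X₀))
  set ζ := (g₀ (h Y) z₀)⁻¹ • z₀ with hζdef
  have gΥζ : g₀ (h Y) ζ = 1 := by
    rw [hζdef, map_smul, smul_eq_mul, inv_mul_cancel₀ hz₀]
  set X₂d := h ζ - (2⁻¹ * g₀ (h ζ) ζ) • h Y with hX₂d
  have formula : ∀ z : V, h z = g₀ (h Y) z • X₂d + g₀ X₂d z • h Y := by
    intro z
    have key : ∀ v : V, g₀ (h z - (g₀ (h Y) z • X₂d + g₀ X₂d z • h Y)) v = 0 := by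
      intro v
      have hz' : g₀ (h Y) (z - g₀ (h Y) z • ζ) = 0 := by
        rw [map_sub, map_smul, smul_eq_mul, gΥζ, mul_one, sub_self]
      have hv' : g₀ (h Y) (v - g₀ (h Y) v • ζ) = 0 := by
        rw [map_sub, map_smul, smul_eq_mul, gΥζ, mul_one, sub_self]
      have hBB := polarB _ _ hz' hv'
      have hzζ : g₀ (h z) ζ = g₀ (h ζ) z := by rw [hsymm z, hg₀symm]
      rw [hX₂d]
      simp only [map_sub, map_add, map_smul, LinearMap.sub_apply, LinearMap.add_apply,
        LinearMap.smul_apply, smul_eq_mul] at hBB ⊢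
      rw [hzζ] at hBB
      linear_combination hBB
    have hd := keyZ _ (key _) (key Y) (key X₀)
    rwa [sub_eq_zero] at hd
  constructor
  · refine ⟨X₂d, formula, ?_⟩
    intro y hy
    have e1 := hy ζ
    have e2 := formula ζ
    rw [gΥζ, one_smul] at e1 e2
    have e3 : y - X₂d = (g₀ X₂d ζ - g₀ y ζ) • h Y := by
      have h' : y + g₀ y ζ • h Y = X₂d + g₀ X₂d ζ • h Y := e1.symm.trans e2
      calc y - X₂d = (y + g₀ y ζ • h Y) - X₂d - g₀ y ζ • h Y := by abel
        _ = (X₂d + g₀ X₂d ζ • h Y) - X₂d - g₀ y ζ • h Y := by rw [h']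
        _ = g₀ X₂d ζ • h Y - g₀ y ζ • h Y := by abel
        _ = (g₀ X₂d ζ - g₀ y ζ) • h Y := (sub_smul _ _ _).symm
    have e4 := congrArg (fun w => g₀ w ζ) e3
    simp only [map_sub, LinearMap.sub_apply, map_smul, LinearMap.smul_apply,
      smul_eq_mul, gΥζ, mul_one] at e4
    have e5 : g₀ X₂d ζ - g₀ y ζ = 0 := by linarith
    rw [e5, zero_smul, sub_eq_zero] at e3
    exact e3
  · intro X₂ hf
    have gX2Y : g₀ X₂ Y = 1 := by
      have e := hf Y
      rw [hhYY, zero_smul, zero_add] at e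
      have e' : (g₀ X₂ Y - 1) • h Y = 0 := by
        rw [sub_smul, one_smul, ← e, sub_self]
      rcases smul_eq_zero.mp e' with h1 | h2
      · linarith [h1]
      · exact absurd h2 hΥ
    have pairBoth : ∀ c d : ℝ, c • X₂ + d • h Y = 0 → c = 0 ∧ d = 0 := by
      intro c d heq
      have hc := congrArg (fun w => g₀ w Y) heq
      simp only [map_add, map_smul, LinearMap.add_apply, LinearMap.smul_apply,
        smul_eq_mul, map_zero, LinearMap.zero_apply] at hc
      rw [gX2Y, hhYY] at hc
      have hc0 : c = 0 := by linarith
      rw [hc0, zero_smul, zero_add] at heq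
      exact ⟨hc0, (smul_eq_zero.mp heq).resolve_right hΥ⟩
    have gsym1 : g₀ (h Y) X₂ = g₀ X₂ (h Y) := hg₀symm _ _
    have hfY := hf (h Y)
    have hfX₂ := hf X₂
    rw [gsym1] at hfX₂
    have hfX₀ := hf X₀
    -- first vector equation from h³ Y = 0
    have E1 := hnil' Y
    rw [hfY, map_add, map_smul, map_smul, hfX₂, hfY] at E1
    have E1' : (g₀ (h Y) (h Y) * g₀ X₂ (h Y) + g₀ X₂ (h Y) * g₀ (h Y) (h Y)) • X₂
        + (g₀ (h Y) (h Y) * g₀ X₂ X₂ + g₀ X₂ (h Y) * g₀ X₂ (h Y)) • h Y = 0 := by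
      linear_combination (norm := module) E1
    obtain ⟨s1, s2⟩ := pairBoth _ _ E1'
    -- second vector equation from h² X₀ = 0
    have E2 := hhhX
    rw [hfX₀, map_add, map_smul, map_smul, hfX₂, hfY] at E2
    have E2' : (g₀ (h Y) X₀ * g₀ X₂ (h Y) + g₀ X₂ X₀ * g₀ (h Y) (h Y)) • X₂
        + (g₀ (h Y) X₀ * g₀ X₂ X₂ + g₀ X₂ X₀ * g₀ X₂ (h Y)) • h Y = 0 := by
      linear_combination (norm := module) E2
    obtain ⟨s3, s4⟩ := pairBoth _ _ E2'
    by_cases hA : g₀ (h Y) (h Y) = 0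
    · have hB : g₀ X₂ (h Y) = 0 := by
        have : g₀ X₂ (h Y) * g₀ X₂ (h Y) = 0 := by rw [hA] at s2; linarith
        exact mul_self_eq_zero.mp this
      have hP : g₀ (h Y) X₀ ≠ 0 := fun hP0 => hΥ (keyZ _ hA hhYY hP0)
      have hS : g₀ X₂ X₂ = 0 := by
        rw [hB] at s4
        rcases mul_eq_zero.mp (by linarith : g₀ (h Y) X₀ * g₀ X₂ X₂ = 0) with h1 | h2
        · exact absurd h1 hP
        · exact h2
      exact ⟨hS, gX2Y, hB⟩
    · have hB : g₀ X₂ (h Y) = 0 := by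
        rcases mul_eq_zero.mp (by linarith : g₀ (h Y) (h Y) * g₀ X₂ (h Y) = 0) with h1 | h2
        · exact absurd h1 hA
        · exact h2
      have hS : g₀ X₂ X₂ = 0 := by
        rw [hB] at s2
        rcases mul_eq_zero.mp (by linarith : g₀ (h Y) (h Y) * g₀ X₂ X₂ = 0) with h1 | h2
        · exact absurd h1 hA
        · exact h2
      exact ⟨hS, gX2Y, hB⟩
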